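/- arXiv:2403.10163 — 3 statements merged into one kernel-verified Lean document; each statement's English description precedes it below -/
import Mathlib

section
/- Let G be a graph containing K_{2,n-2} as a spanning subgraph, with the bipartition parts D = {u', u''} of size 2 and R of size n−2. If the set of edges of G inside R together with the edge u'u'' (if present) has cardinality at least 2, then G contains C_{3,3}, the graph formed by two triangles sharing exactly one common vertex, as a subgraph. -/
open SimpleGraph

/-- The adjacency spectral radius of a finite simple graph. -/
noncomputable def specRad {V : Type*} [Fintype V] [DecidableEq V] (G : SimpleGraph V) : ℝ :=
  letI := Classical.decRel G.Adj
  sSup ((fun μ : ℝ => |μ|) '' spectrum ℝ (G.adjMatrix ℝ))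

/-- `G` contains a copy of `H` as a subgraph. -/
def Contains {V W : Type*} (G : SimpleGraph V) (H : SimpleGraph W) : Prop :=
  ∃ f : W ↪ V, ∀ a b, H.Adj a b → G.Adj (f a) (f b)

/-- `G` contains `C_{l,l}`: two cycles of length `l` sharing exactly one vertex. -/
def ContainsCll {V : Type*} (G : SimpleGraph V) (l : ℕ) : Prop :=
  ∃ (u : V) (c₁ c₂ : G.Walk u u), c₁.IsCycle ∧ c₂.IsCycle ∧ c₁.length = l ∧ c₂.length = l ∧
    ∀ v, v ∈ c₁.support → v ∈ c₂.support → v = u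

/-- Theta graph on `k` vertices: the cycle `0,1,…,k-1` plus a chord from `0` to `a`. -/
def thetaGraph (k a : ℕ) : SimpleGraph (Fin k) :=
  SimpleGraph.fromRel (fun i j =>
    (j : ℕ) = (i : ℕ) + 1 ∨ ((i : ℕ) = k - 1 ∧ (j : ℕ) = 0) ∨ ((i : ℕ) = 0 ∧ (j : ℕ) = a))

/-- `G` contains some member of `Θ_k`, the set of Theta graphs on `k` vertices. -/
def ContainsTheta {V : Type*} (G : SimpleGraph V) (k : ℕ) : Prop :=
  ∃ a, 2 ≤ a ∧ a ≤ k - 2 ∧ Contains G (thetaGraph k a)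

/-- The join of two graphs: all edges between the two vertex sets are added. -/
def joinG {V W : Type*} (G : SimpleGraph V) (H : SimpleGraph W) : SimpleGraph (V ⊕ W) where
  Adj a b := match a, b with
    | Sum.inl a, Sum.inl b => G.Adj a b
    | Sum.inr a, Sum.inr b => H.Adj a b
    | Sum.inl _, Sum.inr _ => True
    | Sum.inr _, Sum.inl _ => True
  symm := by
    constructor
    rintro (a | a) (b | b) h
    · exact G.adj_symm h
    · trivial
    · trivial
    · exact H.adj_symm h
  loopless := by
    constructor
    rintro (a | a) h
    · exact G.irrefl h
    · exact H.irrefl h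

/-- The disjoint union of `t` paths, the `i`-th having `f i` vertices. -/
def pathsUnion (t : ℕ) (f : ℕ → ℕ) : SimpleGraph (Σ i : Fin t, Fin (f i.1)) where
  Adj a b := a.1 = b.1 ∧ ((a.2 : ℕ) + 1 = (b.2 : ℕ) ∨ (b.2 : ℕ) + 1 = (a.2 : ℕ))
  symm := by
    constructor
    rintro ⟨i, a⟩ ⟨j, b⟩ ⟨h₁, h₂⟩
    exact ⟨h₁.symm, h₂.symm⟩
  loopless := by
    constructor
    rintro ⟨i, a⟩ ⟨-, h⟩
    omega

/-- `H` is a minor of `G`: disjoint connected branch sets, one for each vertex of `H`,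
with edges of `G` between branch sets corresponding to edges of `H`. -/
def IsMinor {V W : Type*} (H : SimpleGraph W) (G : SimpleGraph V) : Prop :=
  ∃ B : W → Set V, (∀ w, (B w).Nonempty) ∧ (∀ w, (G.induce (B w)).Connected) ∧
    (∀ w₁ w₂, w₁ ≠ w₂ → Disjoint (B w₁) (B w₂)) ∧
    ∀ w₁ w₂, H.Adj w₁ w₂ → ∃ v₁ ∈ B w₁, ∃ v₂ ∈ B w₂, G.Adj v₁ v₂

/-- Planarity via Wagner's theorem: no `K₅` minor and no `K₃,₃` minor. -/
def IsPlanar {V : Type*} (G : SimpleGraph V) : Prop :=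
  ¬ IsMinor (⊤ : SimpleGraph (Fin 5)) G ∧
  ¬ IsMinor (completeBipartiteGraph (Fin 3) (Fin 3)) G

/-!
Every vertex of `R` is a common neighbour of `u'` and `u''`, so each of the two given edges closes
triangles with `D`. If `u'u''` is an edge and `ab` is an edge of `R`, take the triangles
`u'u''r` (for any third `r ∈ R`) and `u'ab`. If both edges lie in `R` and are disjoint, say `ab`
and `cd`, take `u'ab` and `u'cd`; if they share a vertex, say `ab` and `ad`, take `abu'` and
`adu''`.
-/

namespace SimpleGraph

variable {V : Type*} {G : SimpleGraph V}

lemma Walk.isCycle_triangle {u v w : V} (huv : G.Adj u v) (hvw : G.Adj v w) (hwu : G.Adj w u) :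
    (Walk.cons huv (Walk.cons hvw (Walk.cons hwu Walk.nil))).IsCycle := by
  simp [Walk.cons_isCycle_iff, huv.ne, hvw.ne, hwu.ne, huv.ne.symm, hwu.ne.symm]

lemma containsCll_three_of_triangles {u x y a b : V}
    (hux : G.Adj u x) (hxy : G.Adj x y) (hyu : G.Adj y u)
    (hua : G.Adj u a) (hab : G.Adj a b) (hbu : G.Adj b u)
    (hxa : x ≠ a) (hxb : x ≠ b) (hya : y ≠ a) (hyb : y ≠ b) :
    ContainsCll G 3 := by
  refine ⟨u, _, _, Walk.isCycle_triangle hux hxy hyu, Walk.isCycle_triangle hua hab hbu, rfl, rfl,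
    fun v hv₁ hv₂ => ?_⟩
  simp only [Walk.support_cons, Walk.support_nil, List.mem_cons, List.not_mem_nil,
    or_false] at hv₁ hv₂
  rcases hv₁ with rfl | rfl | rfl | rfl <;> rcases hv₂ with h | h | h | h <;> tauto

end SimpleGraph

lemma Sym2.mk_injOn_lt {α : Type*} [LinearOrder α] :
    Set.InjOn (fun p : α × α => s(p.1, p.2)) {p | p.1 < p.2} := by
  intro p hp q hq h
  rcases Sym2.mk_eq_mk_iff.mp h with h | rfl
  · exact h
  · exact (lt_asymm hp hq).elim

namespace SimpleGraph

section SpanningCompleteBipartite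

variable {α β : Type*} {G : SimpleGraph (α ⊕ β)}
  (hspan : ∀ i j, G.Adj (Sum.inl i) (Sum.inr j))
include hspan

lemma containsCll_three_of_adj_inl_of_adj_inr [Fintype β] (hβ : 2 < Fintype.card β)
    {i₀ i₁ : α} {a b : β} (hi : G.Adj (Sum.inl i₀) (Sum.inl i₁))
    (hab : G.Adj (Sum.inr a) (Sum.inr b)) :
    ContainsCll G 3 := by
  classical
  obtain ⟨r, -, hr⟩ := Finset.exists_mem_notMem_of_card_lt_card
    (s := {a, b}) (t := Finset.univ) ((Finset.card_le_two).trans_lt hβ)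
  simp only [Finset.mem_insert, Finset.mem_singleton, not_or] at hr
  exact containsCll_three_of_triangles hi (hspan i₁ r) (hspan i₀ r).symm
    (hspan i₀ a) hab (hspan i₀ b).symm (by simp) (by simp) (by simp [hr.1]) (by simp [hr.2])

lemma containsCll_three_of_adj_inr_of_adj_inr_of_disjoint (i : α) {a b c d : β}
    (hab : G.Adj (Sum.inr a) (Sum.inr b)) (hcd : G.Adj (Sum.inr c) (Sum.inr d))
    (hac : a ≠ c) (had : a ≠ d) (hbc : b ≠ c) (hbd : b ≠ d) :
    ContainsCll G 3 :=
  containsCll_three_of_triangles (hspan i a) hab (hspan i b).symm (hspan i c) hcd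
    (hspan i d).symm (by simpa) (by simpa) (by simpa) (by simpa)

lemma containsCll_three_of_adj_inr_of_adj_inr_of_common {i₀ i₁ : α} (hi : i₀ ≠ i₁) {a b d : β}
    (hab : G.Adj (Sum.inr a) (Sum.inr b)) (had : G.Adj (Sum.inr a) (Sum.inr d)) (hbd : b ≠ d) :
    ContainsCll G 3 :=
  containsCll_three_of_triangles hab (hspan i₀ b).symm (hspan i₀ a) had (hspan i₁ d).symm
    (hspan i₁ a) (by simpa) (by simp) (by simp) (by simpa)

lemma containsCll_three_of_two_edges_inr {i₀ i₁ : α} (hi : i₀ ≠ i₁) {a b c d : β}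
    (hab : G.Adj (Sum.inr a) (Sum.inr b)) (hcd : G.Adj (Sum.inr c) (Sum.inr d))
    (hne : s(a, b) ≠ s(c, d)) :
    ContainsCll G 3 := by
  by_cases hac : a = c
  · subst hac
    exact containsCll_three_of_adj_inr_of_adj_inr_of_common hspan hi hab hcd
      fun h => hne (by rw [h])
  by_cases had : a = d
  · subst had
    exact containsCll_three_of_adj_inr_of_adj_inr_of_common hspan hi hab hcd.symm
      fun h => hne (by rw [h, Sym2.eq_swap])
  by_cases hbc : b = c
  · subst hbc
    exact containsCll_three_of_adj_inr_of_adj_inr_of_common hspan hi hab.symm hcd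
      fun h => hne (by rw [h, Sym2.eq_swap])
  by_cases hbd : b = d
  · subst hbd
    exact containsCll_three_of_adj_inr_of_adj_inr_of_common hspan hi hab.symm hcd.symm
      fun h => hne (by rw [h])
  exact containsCll_three_of_adj_inr_of_adj_inr_of_disjoint hspan i₀ hab hcd hac had hbc hbd

end SpanningCompleteBipartite

end SimpleGraph

theorem stmt2 (n : ℕ) (hn : 7 ≤ n) (G : SimpleGraph (Fin 2 ⊕ Fin (n - 2)))
    [DecidableRel G.Adj]
    (hspan : ∀ (i : Fin 2) (j : Fin (n - 2)), G.Adj (Sum.inl i) (Sum.inr j))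
    (hcard : 2 ≤ (Finset.univ.filter fun p : Fin (n - 2) × Fin (n - 2) =>
          p.1 < p.2 ∧ G.Adj (Sum.inr p.1) (Sum.inr p.2)).card
        + (if G.Adj (Sum.inl 0) (Sum.inl 1) then 1 else 0)) :
    ContainsCll G 3 := by
  set E := Finset.univ.filter fun p : Fin (n - 2) × Fin (n - 2) =>
    p.1 < p.2 ∧ G.Adj (Sum.inr p.1) (Sum.inr p.2)
  by_cases hD : G.Adj (Sum.inl 0) (Sum.inl 1)
  · rw [if_pos hD] at hcard
    obtain ⟨p, hp⟩ := Finset.card_pos.mp (show 0 < E.card by omega)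
    have hR : 2 < Fintype.card (Fin (n - 2)) := by simp only [Fintype.card_fin]; omega
    exact containsCll_three_of_adj_inl_of_adj_inr hspan hR hD (Finset.mem_filter.mp hp).2.2
  · rw [if_neg hD, add_zero] at hcard
    obtain ⟨p, hp, q, hq, hpq⟩ := Finset.one_lt_card.mp hcard
    simp only [E, Finset.mem_filter, Finset.mem_univ, true_and] at hp hq
    exact containsCll_three_of_two_edges_inr hspan (show (0 : Fin 2) ≠ 1 by decide) hp.2 hq.2
      fun h => hpq (Sym2.mk_injOn_lt hp.1 hq.1 h)
end

section
/- Let G be a planar graph whose vertex set is D ∪ R with D = {u', u''}, |R| = n−2 ≥ 2, every vertex of R adjacent to both u' and u'', and suppose G is C_{l,l}-free for some l ≥ 3 with n ≥ 2(2l−1). Then G[R] is a disjoint union of at least two paths. -/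
open SimpleGraph

/-!
Write `u'`, `u''` for `Sum.inl 0`, `Sum.inl 1` and `R` for the range of `Sum.inr`. A vertex of `R`
with three neighbours in `R` spans a `K₃,₃` with them and `u'`, `u''`, so `G[R]` has maximum
degree at most `2`. If `G[R]` were connected it would then have a Hamiltonian path, on
`n - 2 ≥ 2l - 2` vertices, and its first and last `l - 1` vertices, closed up through `u'`, would
form a `C_{l,l}`. A cycle of `G[R]` either covers `R`, making `G[R]` connected, or misses some
vertex `r`; contracting the cycle onto a triangle and the edge `u'r` then yields a `K₅` minor
together with `u''`.
-/

section Minors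

variable {V : Type*} {G : SimpleGraph V}

lemma Contains.isMinor {W : Type*} {H : SimpleGraph W} (h : Contains G H) : IsMinor H G := by
  obtain ⟨f, hf⟩ := h
  refine ⟨fun w => {f w}, fun _ => Set.singleton_nonempty _, fun _ => by simp,
    fun w₁ w₂ hne => ?_, fun w₁ w₂ hadj => ⟨f w₁, rfl, f w₂, rfl, hf _ _ hadj⟩⟩
  simpa using f.injective.ne hne

lemma isMinor_top_of_lt {k : ℕ} (B : Fin k → Set V) (hne : ∀ i, (B i).Nonempty)
    (hconn : ∀ i, (G.induce (B i)).Connected) (hdisj : ∀ i j, i < j → Disjoint (B i) (B j))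
    (hadj : ∀ i j, i < j → ∃ v₁ ∈ B i, ∃ v₂ ∈ B j, G.Adj v₁ v₂) :
    IsMinor (⊤ : SimpleGraph (Fin k)) G := by
  refine ⟨B, hne, hconn, fun i j hij => ?_, fun i j hij => ?_⟩
  · rcases hij.lt_or_gt with h | h
    · exact hdisj i j h
    · exact (hdisj j i h).symm
  · rcases ((top_adj i j).mp hij).lt_or_gt with h | h
    · exact hadj i j h
    · obtain ⟨v₂, h₂, v₁, h₁, h⟩ := hadj j i h
      exact ⟨v₁, h₁, v₂, h₂, h.symm⟩

end Minors

namespace SimpleGraph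

variable {V : Type*} {G : SimpleGraph V}

namespace Walk

variable {u v : V}

lemma IsPath.exists_adj_adj_of_mem {p : G.Walk u v} (hp : p.IsPath) {x : V}
    (hx : x ∈ p.support) (hxu : x ≠ u) (hxv : x ≠ v) :
    ∃ y z, y ≠ z ∧ y ∈ p.support ∧ z ∈ p.support ∧ G.Adj x y ∧ G.Adj x z := by
  obtain ⟨i, rfl, hi⟩ := mem_support_iff_exists_getVert.mp hx
  have h0 : i ≠ 0 := by rintro rfl; simp at hxu
  have hl : i ≠ p.length := by rintro rfl; simp at hxv
  have hprev : G.Adj (p.getVert (i - 1)) (p.getVert i) := by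
    simpa [Nat.sub_add_cancel (Nat.pos_of_ne_zero h0)] using
      p.adj_getVert_succ (i := i - 1) (by omega)
  refine ⟨p.getVert (i - 1), p.getVert (i + 1), fun h => ?_, p.getVert_mem_support _,
    p.getVert_mem_support _, hprev.symm, p.adj_getVert_succ (by omega)⟩
  have := hp.getVert_injOn (by simp; omega) (by simp; omega) h
  omega

lemma IsPath.exists_isCycle_of_adj {a b : V} {p : G.Walk a b} (hp : p.IsPath)
    (hlen : 0 < p.length) (hu : u ∉ p.support) (ha : G.Adj u a) (hb : G.Adj u b) :
    ∃ c : G.Walk u u, c.IsCycle ∧ c.length = p.length + 2 ∧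
      ∀ w ∈ c.support, w = u ∨ w ∈ p.support := by
  have hab : a ≠ b := by
    rintro rfl
    exact hlen.ne' (length_eq_zero_iff.mpr (isPath_iff_nil.mp hp))
  refine ⟨cons hb (cons ha p).reverse, (cons_isCycle_iff _ hb).mpr ⟨(hp.cons hu).reverse, ?_⟩,
    by simp, fun w hw => ?_⟩
  · rw [edges_reverse, List.mem_reverse, edges_cons, List.mem_cons]
    rintro (h | h)
    · exact hab (Sym2.congr_right.mp h).symm
    · exact hu (p.fst_mem_support_of_mem_edges h)
  · simp only [support_cons, support_reverse, List.reverse_cons, List.mem_cons, List.mem_append,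
      List.mem_reverse, List.not_mem_nil, or_false] at hw
    tauto

lemma support_tail_subset (p : G.Walk u v) : p.tail.support ⊆ p.support := by
  simpa [tail] using List.drop_subset _ _

lemma IsPath.notMem_support_tail {p : G.Walk u v} (hp : p.IsPath) (hnil : ¬p.Nil) :
    u ∉ p.tail.support :=
  (List.nodup_cons.mp (cons_support_tail hnil ▸ hp.support_nodup)).1

lemma IsCycle.exists_adj_walk_adj {c : G.Walk v v} (hc : c.IsCycle) :
    ∃ y a b, ∃ p : G.Walk a b, G.Adj v y ∧ G.Adj v a ∧ G.Adj y b ∧ v ∉ p.support ∧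
      y ∉ p.support ∧ y ∈ c.support ∧ ∀ w ∈ p.support, w ∈ c.support := by
  obtain ⟨y, hvy, q, rfl⟩ := not_nil_iff.mp hc.not_nil
  obtain ⟨hq, -⟩ := (cons_isCycle_iff q hvy).mp hc
  have hq2 : 2 ≤ q.length := by have := hc.three_le_length; simp at this; omega
  have hqnil : ¬q.Nil := by rw [← length_eq_zero_iff]; omega
  have hrnil : ¬q.tail.reverse.Nil := by
    have := length_tail_add_one hqnil
    rw [nil_reverse, ← length_eq_zero_iff]
    omega
  refine ⟨y, _, _, q.tail.reverse.tail, hvy, adj_snd hrnil, adj_snd hqnil,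
    hq.tail.reverse.notMem_support_tail hrnil, fun h => ?_, by simp, fun w hw => ?_⟩
  · have hsub := (q.tail.reverse.support_tail_subset h)
    rw [support_reverse, List.mem_reverse] at hsub
    exact hq.notMem_support_tail hqnil hsub
  · have hsub := (q.tail.reverse.support_tail_subset hw)
    rw [support_reverse, List.mem_reverse] at hsub
    exact List.mem_cons_of_mem _ (q.support_tail_subset hsub)

end Walk

lemma Connected.exists_isPath_length_eq [Fintype V] (hG : G.Connected)
    (hdeg : ∀ v, (G.neighborSet v).ncard ≤ 2) :
    ∀ k < Fintype.card V, ∃ (a b : V) (p : G.Walk a b), p.IsPath ∧ p.length = k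
  | 0, _ => ⟨hG.nonempty.some, _, .nil, .nil, rfl⟩
  | k + 1, hk => by
    classical
    obtain ⟨a, b, p, hp, rfl⟩ := hG.exists_isPath_length_eq hdeg k (by omega)
    obtain ⟨w, hw⟩ : ∃ w, w ∉ p.support := by
      by_contra! h
      have : Finset.univ.card ≤ p.support.length :=
        (Finset.card_le_card fun x _ => List.mem_toFinset.mpr (h x)).trans
          p.support.toFinset_card_le
      simp at this
      omega
    obtain ⟨⟨⟨x, y⟩, hxy⟩, -, hx, hy⟩ :=
      (hG a w).some.exists_boundary_dart {z | z ∈ p.support} p.start_mem_support hw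
    by_cases hxa : x = a
    · subst hxa
      exact ⟨y, b, .cons hxy.symm p, hp.cons hy, by simp⟩
    by_cases hxb : x = b
    · subst hxb
      exact ⟨a, y, p.concat hxy, hp.concat hy hxy, by simp⟩
    obtain ⟨y', z', hyz', hy', hz', hxy', hxz'⟩ := hp.exists_adj_adj_of_mem hx hxa hxb
    have : 2 < (G.neighborSet x).ncard := (Set.two_lt_ncard_iff).mpr
      ⟨y, y', z', hxy, hxy', hxz', fun h => hy (h ▸ hy'), fun h => hy (h ▸ hz'), hyz'⟩
    exact absurd (hdeg x) (by omega)

lemma containsCll_of_isPath {u a b : V} {l : ℕ} {P : G.Walk a b} (hP : P.IsPath) (hl : 3 ≤ l)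
    (hlen : P.length = 2 * l - 3) (hu : u ∉ P.support) (hadj : ∀ w ∈ P.support, G.Adj u w) :
    ContainsCll G l := by
  have hs₁ : (P.take (l - 2)).support = P.support.take (l - 1) := by
    rw [Walk.support_take, show l - 2 + 1 = l - 1 by omega]
  have hs₂ : (P.drop (l - 1)).support = P.support.drop (l - 1) := by
    rw [Walk.drop_support_eq_support_drop_min, min_eq_left (by omega)]
  have hdisj := List.disjoint_take_drop hP.support_nodup (le_refl (l - 1))
  obtain ⟨c₁, hc₁, hlen₁, hsup₁⟩ := (hP.take (l - 2)).exists_isCycle_of_adj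
    (by simp; omega) (fun h => hu (List.mem_of_mem_take (hs₁ ▸ h)))
    (hadj _ P.start_mem_support) (hadj _ (P.getVert_mem_support _))
  obtain ⟨c₂, hc₂, hlen₂, hsup₂⟩ := (hP.drop (l - 1)).exists_isCycle_of_adj
    (by simp; omega) (fun h => hu (List.mem_of_mem_drop (hs₂ ▸ h)))
    (hadj _ (P.getVert_mem_support _)) (hadj _ P.end_mem_support)
  refine ⟨u, c₁, c₂, hc₁, hc₂, by simp at hlen₁; omega, by simp at hlen₂; omega,
    fun w h₁ h₂ => ?_⟩
  rcases hsup₁ w h₁ with h | h₁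
  · exact h
  rcases hsup₂ w h₂ with h | h₂
  · exact h
  exact absurd (hs₂ ▸ h₂) (hdisj (hs₁ ▸ h₁))

end SimpleGraph

section TwoApexes

variable {W : Type*} {G : SimpleGraph (Fin 2 ⊕ W)}

lemma isMinor_K33_of_two_lt_ncard_neighborSet (hspan : ∀ i j, G.Adj (.inl i) (.inr j)) {v : W}
    (h : 2 < ((G.comap Sum.inr).neighborSet v).ncard) :
    IsMinor (completeBipartiteGraph (Fin 3) (Fin 3)) G := by
  obtain ⟨w₁, w₂, w₃, h₁, h₂, h₃, h₁₂, h₁₃, h₂₃⟩ :=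
    (Set.two_lt_ncard_iff (Set.finite_of_ncard_pos (by omega))).mp h
  have hv₁ := (G.comap Sum.inr).ne_of_adj h₁
  have hv₂ := (G.comap Sum.inr).ne_of_adj h₂
  have hv₃ := (G.comap Sum.inr).ne_of_adj h₃
  have hspan' : ∀ i j, G.Adj (.inr j) (.inl i) := fun i j => (hspan i j).symm
  simp only [mem_neighborSet, comap_adj] at h₁ h₂ h₃
  set f : Fin 3 ⊕ Fin 3 → Fin 2 ⊕ W :=
    Sum.elim ![.inl 0, .inl 1, .inr v] ![.inr w₁, .inr w₂, .inr w₃]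
  have hf : Function.Injective f := by
    rintro (i | i) (j | j) h <;> fin_cases i <;> fin_cases j <;> simp_all [f]
  refine Contains.isMinor ⟨⟨f, hf⟩, ?_⟩
  rintro (i | i) (j | j) h <;> fin_cases i <;> fin_cases j <;>
    simp_all [f, completeBipartiteGraph, h₁.symm, h₂.symm, h₃.symm]

lemma isMinor_K5_of_isCycle (hspan : ∀ i j, G.Adj (.inl i) (.inr j)) {v r : W}
    {c : (G.comap Sum.inr).Walk v v} (hc : c.IsCycle) (hr : r ∉ c.support) :
    IsMinor (⊤ : SimpleGraph (Fin 5)) G := by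
  obtain ⟨y, a, b, p, hvy, hva, hyb, hvp, hyp, hyc, hpc⟩ := hc.exists_adj_walk_adj
  have hvr : v ≠ r := fun h => hr (h ▸ c.start_mem_support)
  have hyr : y ≠ r := fun h => hr (h ▸ hyc)
  have hrp : r ∉ p.support := fun h => hr (hpc r h)
  simp only [comap_adj] at hvy hva hyb
  set q := p.map (Hom.comap Sum.inr G)
  have hq : ∀ x, Sum.inr x ∈ q.support ↔ x ∈ p.support := by simp [q]
  have hq' : ∀ i, Sum.inl i ∉ q.support := by simp [q]
  -- The cycle contracts onto the triangle `v y q`; the branch set `{u', r}` reaches `u''` via `r`.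
  refine isMinor_top_of_lt
    ![{.inl 1}, {.inl 0, .inr r}, {.inr v}, {.inr y}, {w | w ∈ q.support}] ?_ ?_ ?_ ?_
  · intro i
    fin_cases i <;> simp
  · intro i
    fin_cases i
    exacts [by simp, induce_pair_connected_of_adj (hspan 0 r), by simp, by simp,
      q.connected_induce_support]
  · intro i j hij
    fin_cases i <;> fin_cases j <;> simp [hq, hq', hvr, hyr, hrp, hvp, hyp, hvy.ne] at hij ⊢
  · intro i j hij
    fin_cases i <;> fin_cases j <;> simp [hq, hq', hspan] at hij ⊢
    exacts [⟨a, p.start_mem_support⟩, .inl ⟨a, p.start_mem_support⟩, hvy,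
      ⟨a, p.start_mem_support, hva⟩, ⟨b, p.end_mem_support, hyb⟩]

end TwoApexes

theorem stmt5_general (n l : ℕ) (hl : 3 ≤ l) (hn : 2 * (2 * l - 1) ≤ n)
    (G : SimpleGraph (Fin 2 ⊕ Fin (n - 2))) (hpl : IsPlanar G)
    (hspan : ∀ (i : Fin 2) (j : Fin (n - 2)), G.Adj (Sum.inl i) (Sum.inr j))
    (hfree : ¬ ContainsCll G l) :
    (G.induce (Set.range Sum.inr)).IsAcyclic ∧
    (∀ v : Fin (n - 2), {w : Fin (n - 2) | G.Adj (Sum.inr v) (Sum.inr w)}.ncard ≤ 2) ∧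
    ¬ (G.induce (Set.range Sum.inr)).Connected := by
  set H := G.comap Sum.inr
  have hdeg : ∀ v, (H.neighborSet v).ncard ≤ 2 := fun v =>
    not_lt.mp fun h => hpl.2 (isMinor_K33_of_two_lt_ncard_neighborSet hspan h)
  have hconn : ¬H.Connected := fun hH => by
    obtain ⟨a, b, P, hP, hlen⟩ := hH.exists_isPath_length_eq hdeg (2 * l - 3) (by simp; omega)
    exact hfree (containsCll_of_isPath (u := .inl 0) (hP.map (f := Hom.comap Sum.inr G)
      Sum.inr_injective) hl (by simpa using hlen) (by simp) (by simp [hspan]))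
  have hacyc : H.IsAcyclic := fun v c hc => by
    by_cases hr : ∀ w, w ∈ c.support
    · exact hconn (H.connected_iff_exists_forall_reachable.mpr
        ⟨v, fun w => ⟨c.takeUntil w (hr w)⟩⟩)
    · obtain ⟨r, hr⟩ := not_forall.mp hr
      exact hpl.1 (isMinor_K5_of_isCycle hspan hc hr)
  let e := (Embedding.comap (Function.Embedding.inr) G).isoInduceRange
  exact ⟨e.isAcyclic_iff.mp hacyc, hdeg, fun h => hconn (e.connected_iff.mpr h)⟩

theorem stmt5 (n l : ℕ) (hl : 3 ≤ l) (hn : 2 * (2 * l - 1) ≤ n) (hn2 : 2 ≤ n - 2)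
    (G : SimpleGraph (Fin 2 ⊕ Fin (n - 2))) (hpl : IsPlanar G)
    (hspan : ∀ (i : Fin 2) (j : Fin (n - 2)), G.Adj (Sum.inl i) (Sum.inr j))
    (hfree : ¬ ContainsCll G l) :
    (G.induce (Set.range Sum.inr)).IsAcyclic ∧
    (∀ v : Fin (n - 2), {w : Fin (n - 2) | G.Adj (Sum.inr v) (Sum.inr w)}.ncard ≤ 2) ∧
    ¬ (G.induce (Set.range Sum.inr)).Connected :=
  stmt5_general n l hl hn G hpl hspan hfree
end

section
/- Let l ≥ 4 and let H be a disjoint union of vertex-disjoint paths with i-th longest path of order n_i(H). The join K_2 + H is C_{l,l}-free if and only if (n_1(H)+n_2(H) ≤ 2l−4 and n_1(H) ≤ l−2) or (n_1(H)+n_2(H) ≤ 2l−4 and n_2(H)+n_3(H) ≤ l−3). -/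
open SimpleGraph

/-!
The paths form a forest, so every cycle of `K₂ + H` passes through `K₂`. Cut at its
`k ∈ {1, 2}` vertices in `K₂`, a cycle of length `l` leaves `l - k` vertices of `H` in at most
`k` runs, each lying on a single path.

Let two such cycles share exactly one vertex. If they use `K₂` at most twice in total, at least
`2l - 3` vertices of `H` lie on at most two paths, so `f 0 + f 1 ≥ 2l - 3`. Otherwise they share
a vertex of `K₂`, and the cycle through it alone puts `l - 1` vertices on one path, so
`f 0 ≥ l - 1`. Then `f 1 + f 2 ≤ l - 3` leaves no room for either cycle off the longest path,
so both meet it, and again `2l - 3` vertices of `H` lie on at most two paths.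

Conversely, if the condition fails, one cycle runs through one vertex of `K₂` and the first
`l - 1` vertices of the longest path, and the other through both vertices of `K₂` and `l - 2`
vertices taken either from the rest of the longest path and the second one, or from the
second and third paths.
-/

namespace SimpleGraph.Walk

variable {V : Type*} {G : SimpleGraph V}

theorem toFinset_support_tail [DecidableEq V] {u : V} {c : G.Walk u u} (hc : ¬c.Nil) :
    c.support.tail.toFinset = c.support.toFinset := by
  rw [← c.cons_tail_support, List.toFinset_cons, List.tail_cons,
    Finset.insert_eq_of_mem (List.mem_toFinset.2 (end_mem_tail_support hc))]

theorem IsCycle.card_support_toFinset [DecidableEq V] {u : V} {c : G.Walk u u}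
    (hc : c.IsCycle) : c.support.toFinset.card = c.length := by
  rw [← toFinset_support_tail hc.not_nil, List.toFinset_card_of_nodup hc.support_nodup,
    List.length_tail, length_support, Nat.add_sub_cancel]

theorem IsCycle.exists_two_neighbors_le {β : Type*} [LinearOrder β] {u : V} {c : G.Walk u u}
    (hc : c.IsCycle) (φ : V → β) :
    ∃ v ∈ c.support, ∃ w₁ ∈ c.support, ∃ w₂ ∈ c.support,
      w₁ ≠ w₂ ∧ G.Adj v w₁ ∧ G.Adj v w₂ ∧ φ w₁ ≤ φ v ∧ φ w₂ ≤ φ v := by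
  classical
  obtain ⟨v, hv, hmax⟩ := c.support.toFinset.exists_max_image φ ⟨u, by simp⟩
  rw [List.mem_toFinset] at hv
  have hc' : (c.rotate v hv).IsCycle := hc.rotate hv
  have hmem : ∀ n, (c.rotate v hv).getVert n ∈ c.support := fun n =>
    (c.mem_support_rotate_iff v hv).1 (getVert_mem_support _ n)
  exact ⟨v, hv, _, hmem 1, _, hmem _, hc'.snd_ne_penultimate, adj_snd hc'.not_nil,
    (adj_penultimate hc'.not_nil).symm, hmax _ (List.mem_toFinset.2 (hmem 1)),
    hmax _ (List.mem_toFinset.2 (hmem _))⟩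

theorem exists_isCycle_of_isChain {u : V} {L : List V}
    (hchain : (u :: L ++ [u]).IsChain G.Adj) (hnodup : (u :: L).Nodup) (hlen : 2 ≤ L.length) :
    ∃ c : G.Walk u u, c.IsCycle ∧ c.length = L.length + 1 ∧ ∀ v, v ∈ c.support ↔ v ∈ u :: L := by
  obtain ⟨c, hc⟩ : ∃ c : G.Walk u u, c.support = u :: L ++ [u] :=
    ⟨(ofSupport _ (List.cons_ne_nil _ _) hchain).copy rfl (by simp),
      (support_copy _ _ _).trans (support_ofSupport _ _)⟩
  have hlength : c.length = L.length + 1 := by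
    simpa [hc] using c.length_support.symm
  refine ⟨c, ?_, hlength, fun v => ?_⟩
  · rw [isCycle_iff_isPath_tail_and_le_length, isPath_def,
      support_tail_of_not_nil _ (not_nil_iff_lt_length.2 (by omega)), hc]
    exact ⟨List.nodup_append_comm.2 hnodup, by omega⟩
  · rw [hc]
    simp only [List.cons_append, List.mem_cons, List.mem_append]
    tauto

end SimpleGraph.Walk

theorem containsCll_of_isChain {V : Type*} {G : SimpleGraph V} {l : ℕ} (hl : 3 ≤ l)
    {u : V} {L₁ L₂ : List V} (h₁ : (u :: L₁ ++ [u]).IsChain G.Adj)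
    (h₂ : (u :: L₂ ++ [u]).IsChain G.Adj) (hnodup : (u :: (L₁ ++ L₂)).Nodup)
    (hl₁ : L₁.length + 1 = l) (hl₂ : L₂.length + 1 = l) : ContainsCll G l := by
  rw [List.nodup_cons, List.mem_append, not_or, List.nodup_append] at hnodup
  obtain ⟨⟨hu₁, hu₂⟩, hnd₁, hnd₂, hdisj⟩ := hnodup
  obtain ⟨c₁, hc₁, hlen₁, hsupp₁⟩ :=
    Walk.exists_isCycle_of_isChain h₁ (List.nodup_cons.2 ⟨hu₁, hnd₁⟩) (by omega)
  obtain ⟨c₂, hc₂, hlen₂, hsupp₂⟩ :=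
    Walk.exists_isCycle_of_isChain h₂ (List.nodup_cons.2 ⟨hu₂, hnd₂⟩) (by omega)
  refine ⟨u, c₁, c₂, hc₁, hc₂, by omega, by omega, fun v hv₁ hv₂ => ?_⟩
  rw [hsupp₁, List.mem_cons] at hv₁
  rw [hsupp₂, List.mem_cons] at hv₂
  rcases hv₁ with rfl | hv₁
  · rfl
  rcases hv₂ with rfl | hv₂
  · rfl
  exact absurd rfl (hdisj v hv₁ v hv₂)

open Finset in
theorem sum_le_sum_range_of_antitone {f : ℕ → ℕ} (hf : Antitone f) {m : ℕ} (I : Finset ℕ)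
    (hI : ∀ i ∈ I, m ≤ i) : ∑ i ∈ I, f i ≤ ∑ i ∈ range #I, f (m + i) := by
  induction I using Finset.induction_on_max with
  | empty => simp
  | insert a s has ih =>
    have ha : a ∉ s := fun h => lt_irrefl a (has a h)
    have hcard : m + #s ≤ a := by
      have hsub : s ⊆ Ico m a := fun i hi => mem_Ico.2 ⟨hI i (mem_insert_of_mem hi), has i hi⟩
      have hs := card_le_card hsub
      have hma := hI a (mem_insert_self _ _)
      rw [Nat.card_Ico] at hs
      omega
    rw [sum_insert ha, card_insert_of_notMem ha, sum_range_succ, add_comm]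
    exact add_le_add (ih fun i hi => hI i (mem_insert_of_mem hi)) (hf hcard)

section joinG

open Finset

variable {V W : Type*} {G : SimpleGraph V} {H : SimpleGraph W}

@[simp] theorem joinG_adj_inl_inr (a : V) (b : W) : (joinG G H).Adj (.inl a) (.inr b) := trivial

@[simp] theorem joinG_adj_inr_inl (a : W) (b : V) : (joinG G H).Adj (.inr a) (.inl b) := trivial

@[simp] theorem joinG_adj_inl_inl {a b : V} : (joinG G H).Adj (.inl a) (.inl b) ↔ G.Adj a b :=
  Iff.rfl

theorem isChain_joinG_inl_map_inr_inl {a b : V} {A : List W} (hA : A.IsChain H.Adj)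
    (hab : A = [] → G.Adj a b) :
    (Sum.inl a :: (A.map Sum.inr ++ [Sum.inl b])).IsChain (joinG G H).Adj := by
  rw [List.isChain_cons, List.isChain_append, List.isChain_map, List.getLast?_map]
  refine ⟨?_, hA, List.IsChain.singleton _, by simp⟩
  cases A with
  | nil => simpa using hab rfl
  | cons x A => simp

theorem containsCll_joinG_top_of_isChain {l : ℕ} (hl : 3 ≤ l) {A B C : List W}
    (hA : A.IsChain H.Adj) (hB : B.IsChain H.Adj) (hC : C.IsChain H.Adj)
    (hnodup : (A ++ B ++ C).Nodup)
    (hlA : A.length + 1 = l) (hlBC : B.length + C.length + 2 = l) :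
    ContainsCll (joinG (⊤ : SimpleGraph (Fin 2)) H) l := by
  refine containsCll_of_isChain (u := Sum.inl 0) (L₁ := A.map Sum.inr)
    (L₂ := B.map Sum.inr ++ Sum.inl 1 :: C.map Sum.inr) hl
    (isChain_joinG_inl_map_inr_inl hA fun h => by simp [h] at hlA; omega) ?_ ?_
    (by simpa) (by simp; omega)
  · simp only [List.cons_append, List.append_assoc]
    rw [List.isChain_cons_split]
    exact ⟨isChain_joinG_inl_map_inr_inl hB fun _ => by decide,
      isChain_joinG_inl_map_inr_inl hC fun _ => by decide⟩
  · simpa [List.nodup_append, List.nodup_map_iff Sum.inr_injective] using hnodup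

variable [DecidableEq V] [DecidableEq W] {ι : Type*} [DecidableEq ι] (κ : W → ι)

/-- Along the walk, each maximal run of vertices of `W` stays in one class of `κ` and is followed
by a vertex of `V`. -/
theorem card_image_toRight_le_card_toLeft_tail (hκ : ∀ x y, H.Adj x y → κ x = κ y)
    {a e : V ⊕ W} (he : e.isLeft) (p : (joinG G H).Walk a e) (hp : p.support.tail.Nodup) :
    #(p.support.toFinset.toRight.image κ) ≤ #p.support.tail.toFinset.toLeft := by
  induction p with
  | nil =>
    obtain ⟨b, rfl⟩ := Sum.isLeft_iff.1 he
    simp [show ({Sum.inl b} : Finset (V ⊕ W)).toRight = ∅ by ext; simp]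
  | @cons a a' e hadj q ih =>
    rw [Walk.support_cons, List.tail_cons] at hp ⊢
    have ih := ih he (hp.sublist (List.tail_sublist _))
    rw [← q.cons_tail_support, List.nodup_cons] at hp
    rw [← q.cons_tail_support] at ih ⊢
    rcases a with x | x <;> rcases a' with y | y <;>
      simp only [List.tail_cons, List.toFinset_cons, toRight_insert_inl, toRight_insert_inr,
        toLeft_insert_inl, toLeft_insert_inr, image_insert] at ih ⊢
    · exact ih.trans (card_le_card (subset_insert _ _))
    · exact ih
    · rw [card_insert_of_notMem (a := y) (by simpa using hp.1)]
      exact (card_insert_le _ _).trans (Nat.succ_le_succ ih)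
    · rwa [hκ x y hadj, insert_idem]

theorem SimpleGraph.Walk.IsCycle.card_image_toRight_le_card_toLeft
    (hκ : ∀ x y, H.Adj x y → κ x = κ y) {u : V ⊕ W} {c : (joinG G H).Walk u u} (hc : c.IsCycle)
    (hK : c.support.toFinset.toLeft.Nonempty) :
    #(c.support.toFinset.toRight.image κ) ≤ #c.support.toFinset.toLeft := by
  obtain ⟨w, hw⟩ := hK
  rw [mem_toLeft, List.mem_toFinset] at hw
  have hc' := hc.rotate hw
  have hsupp : (c.rotate _ hw).support.toFinset = c.support.toFinset := by ext; simp
  calc #(c.support.toFinset.toRight.image κ)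
      = #((c.rotate _ hw).support.toFinset.toRight.image κ) := by rw [hsupp]
    _ ≤ #(c.rotate _ hw).support.tail.toFinset.toLeft :=
      card_image_toRight_le_card_toLeft_tail κ hκ rfl _ hc'.support_nodup
    _ = #c.support.toFinset.toLeft := by
      rw [Walk.toFinset_support_tail hc'.not_nil, hsupp]

end joinG

namespace pathsUnion

open Finset

variable {t : ℕ} {f : ℕ → ℕ}

theorem vertex_ext {x y : Σ i : Fin t, Fin (f i)} (h₁ : x.1 = y.1) (h₂ : (x.2 : ℕ) = y.2) :
    x = y :=
  Sigma.ext h₁ ((Fin.heq_ext_iff (congrArg (fun i : Fin t => f i) h₁)).2 h₂)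

theorem fst_eq_of_adj {x y : Σ i : Fin t, Fin (f i)} (h : (pathsUnion t f).Adj x y) :
    (x.1 : ℕ) = y.1 :=
  congrArg _ h.1

theorem eq_of_adj_of_le {x y₁ y₂ : Σ i : Fin t, Fin (f i)} (h₁ : (pathsUnion t f).Adj x y₁)
    (h₂ : (pathsUnion t f).Adj x y₂) (hle₁ : (y₁.2 : ℕ) ≤ x.2) (hle₂ : (y₂.2 : ℕ) ≤ x.2) :
    y₁ = y₂ :=
  vertex_ext (h₁.1.symm.trans h₂.1) (by have := h₁.2; have := h₂.2; omega)

theorem card_le_sum_image_fst (S : Finset (Σ i : Fin t, Fin (f i))) :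
    #S ≤ ∑ i ∈ S.image (fun x => (x.1 : ℕ)), f i := by
  rw [card_eq_sum_card_image (fun x => (x.1 : ℕ)) S]
  refine sum_le_sum fun i _ => ?_
  refine (card_le_card_of_injOn (fun x => (x.2 : ℕ)) (t := range (f i)) ?_ ?_).trans (by simp)
  · intro x hx
    simp only [coe_filter, Set.mem_ofPred_eq] at hx
    simp [← hx.2]
  · intro x hx y hy hxy
    simp only [coe_filter, Set.mem_ofPred_eq] at hx hy
    exact vertex_ext (Fin.ext (hx.2.trans hy.2.symm)) hxy

theorem card_le_sum_range (hf : Antitone f) {S : Finset (Σ i : Fin t, Fin (f i))} {k m : ℕ}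
    (hk : #(S.image fun x => (x.1 : ℕ)) ≤ k) (hm : ∀ x ∈ S, m ≤ x.1) :
    #S ≤ ∑ i ∈ range k, f (m + i) :=
  calc #S ≤ ∑ i ∈ S.image (fun x => (x.1 : ℕ)), f i := card_le_sum_image_fst S
    _ ≤ ∑ i ∈ range #(S.image fun x => (x.1 : ℕ)), f (m + i) :=
      sum_le_sum_range_of_antitone hf _ fun i hi => by
        obtain ⟨x, hx, rfl⟩ := mem_image.1 hi
        exact hm x hx
    _ ≤ ∑ i ∈ range k, f (m + i) := sum_le_sum_of_subset (range_subset_range.2 hk)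

def pathVertices (t : ℕ) (f : ℕ → ℕ) (i : ℕ) : List (Σ i : Fin t, Fin (f i)) :=
  if h : i < t then (List.finRange (f i)).map (Sigma.mk ⟨i, h⟩) else []

theorem length_pathVertices (hft : ∀ i, 1 ≤ f i ↔ i < t) (i : ℕ) :
    (pathVertices t f i).length = f i := by
  by_cases h : i < t
  · simp [pathVertices, h]
  · have := (hft i).not.2 h
    simp [pathVertices, h]
    omega

theorem fst_of_mem_pathVertices {i : ℕ} {x : Σ i : Fin t, Fin (f i)}
    (hx : x ∈ pathVertices t f i) : (x.1 : ℕ) = i := by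
  unfold pathVertices at hx
  split_ifs at hx
  · obtain ⟨a, -, rfl⟩ := List.mem_map.1 hx
    rfl
  · simp at hx

theorem nodup_pathVertices (i : ℕ) : (pathVertices t f i).Nodup := by
  unfold pathVertices
  split_ifs
  · exact (List.nodup_finRange _).map sigma_mk_injective
  · exact List.nodup_nil

theorem isChain_pathVertices (i : ℕ) : (pathVertices t f i).IsChain (pathsUnion t f).Adj := by
  unfold pathVertices
  split_ifs
  · rw [List.isChain_iff_getElem]
    intro k hk
    simp [pathsUnion]
  · exact List.IsChain.nil

theorem disjoint_of_sublist_pathVertices {i j : ℕ} (hij : i ≠ j)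
    {A B : List (Σ i : Fin t, Fin (f i))}
    (hA : A.Sublist (pathVertices t f i)) (hB : B.Sublist (pathVertices t f j)) : A.Disjoint B :=
  fun _ hxA hxB => hij <|
    (fst_of_mem_pathVertices (hA.subset hxA)).symm.trans (fst_of_mem_pathVertices (hB.subset hxB))

end pathsUnion

section joinPaths

open Finset pathsUnion

variable {t : ℕ} {f : ℕ → ℕ}

/-- A cycle inside the paths would have, at a vertex of maximal position on its path, both cycle
neighbours equal to its predecessor on that path. -/
theorem toLeft_nonempty_of_isCycle {V : Type*} [DecidableEq V] {G : SimpleGraph V}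
    {u : V ⊕ (Σ i : Fin t, Fin (f i))} {c : (joinG G (pathsUnion t f)).Walk u u}
    (hc : c.IsCycle) : c.support.toFinset.toLeft.Nonempty := by
  by_contra hK
  have hinr : ∀ v ∈ c.support, ∃ x, v = Sum.inr x := by
    rintro (w | x) hv
    · exact absurd ⟨w, by simpa using hv⟩ hK
    · exact ⟨x, rfl⟩
  obtain ⟨v, hv, w₁, hw₁, w₂, hw₂, hne, h₁, h₂, hle₁, hle₂⟩ :=
    hc.exists_two_neighbors_le (Sum.elim (fun _ => 0) fun x => (x.2 : ℕ))
  obtain ⟨x, rfl⟩ := hinr v hv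
  obtain ⟨y₁, rfl⟩ := hinr w₁ hw₁
  obtain ⟨y₂, rfl⟩ := hinr w₂ hw₂
  exact hne (congrArg Sum.inr (eq_of_adj_of_le h₁ h₂ hle₁ hle₂))

/-- `Kⱼ` and `Sⱼ` stand for the vertices in `K₂` and in the paths of two cycles of length `l`
sharing one vertex. -/
theorem false_of_two_cycle_traces {l : ℕ} (hl : 4 ≤ l) (hf : Antitone f)
    (h01 : f 0 + f 1 ≤ 2 * l - 4) (h12 : f 0 ≤ l - 2 ∨ f 1 + f 2 ≤ l - 3)
    {K₁ K₂ : Finset (Fin 2)} {S₁ S₂ : Finset (Σ i : Fin t, Fin (f i))}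
    (hcard₁ : #K₁ + #S₁ = l) (hcard₂ : #K₂ + #S₂ = l)
    (hcomp₁ : #(S₁.image fun x => (x.1 : ℕ)) ≤ #K₁)
    (hcomp₂ : #(S₂.image fun x => (x.1 : ℕ)) ≤ #K₂)
    (hshared : #(K₁ ∩ K₂) + #(S₁ ∩ S₂) ≤ 1) : False := by
  set κ := fun x : (Σ i : Fin t, Fin (f i)) => (x.1 : ℕ)
  have hK₁ : #K₁ ≤ 2 := by simpa using card_le_univ K₁
  have hK₂ : #K₂ ≤ 2 := by simpa using card_le_univ K₂
  have hKunion : #(K₁ ∪ K₂) ≤ 2 := by simpa using card_le_univ (K₁ ∪ K₂)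
  have hK := card_union_add_card_inter K₁ K₂
  have hS := card_union_add_card_inter S₁ S₂
  have hbound₀ : ∀ S : Finset _, #(S.image κ) ≤ 2 → #S ≤ f 0 + f 1 := fun S hS => by
    simpa [sum_range_succ] using card_le_sum_range hf (m := 0) hS (by simp)
  by_cases hsmall : #K₁ + #K₂ ≤ 2
  · have := hbound₀ (S₁ ∪ S₂) <| by
      rw [image_union]
      exact (card_union_le _ _).trans (by omega)
    omega
  have hf0 : l - 1 ≤ f 0 := by
    have hsingle : ∀ {K : Finset (Fin 2)} {S : Finset (Σ i : Fin t, Fin (f i))},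
        #K + #S = l → #(S.image κ) ≤ #K → #K ≤ 1 → l - 1 ≤ f 0 := fun hcard hcomp hK => by
      have := card_le_sum_range hf (k := 1) (m := 0) (hcomp.trans hK) (by simp)
      simp only [sum_range_one, add_zero] at this
      omega
    rcases (by omega : #K₁ ≤ 1 ∨ #K₂ ≤ 1) with h | h
    exacts [hsingle hcard₁ hcomp₁ h, hsingle hcard₂ hcomp₂ h]
  have hbound₁ : ∀ S : Finset _, #(S.image κ) ≤ 2 → 0 ∉ S.image κ → #S ≤ f 1 + f 2 :=
    fun S hS h0 => by
      have := card_le_sum_range hf (m := 1) hS fun x hx =>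
        Nat.pos_of_ne_zero fun h => h0 (mem_image.2 ⟨x, hx, h⟩)
      simpa [sum_range_succ] using this
  by_cases h0₁ : 0 ∈ S₁.image κ
  · by_cases h0₂ : 0 ∈ S₂.image κ
    · have hI := card_union_add_card_inter (S₁.image κ) (S₂.image κ)
      have h0 : 1 ≤ #(S₁.image κ ∩ S₂.image κ) := card_pos.2 ⟨0, mem_inter.2 ⟨h0₁, h0₂⟩⟩
      have := hbound₀ (S₁ ∪ S₂) (by rw [image_union]; omega)
      omega
    · have := hbound₁ S₂ (by omega) h0₂
      omega
  · have := hbound₁ S₁ (by omega) h0₁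
    omega

theorem not_containsCll {l : ℕ} (hl : 4 ≤ l) (hf : Antitone f) (h01 : f 0 + f 1 ≤ 2 * l - 4)
    (h12 : f 0 ≤ l - 2 ∨ f 1 + f 2 ≤ l - 3) :
    ¬ ContainsCll (joinG (⊤ : SimpleGraph (Fin 2)) (pathsUnion t f)) l := by
  classical
  rintro ⟨u, c₁, c₂, hc₁, hc₂, hl₁, hl₂, hshared⟩
  have hcard : ∀ {c : (joinG ⊤ (pathsUnion t f)).Walk u u}, c.IsCycle →
      #c.support.toFinset.toLeft + #c.support.toFinset.toRight = c.length := fun hc =>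
    card_toLeft_add_card_toRight.trans hc.card_support_toFinset
  have hcomp : ∀ {c : (joinG ⊤ (pathsUnion t f)).Walk u u}, c.IsCycle →
      #(c.support.toFinset.toRight.image fun x => (x.1 : ℕ)) ≤ #c.support.toFinset.toLeft :=
    fun hc => hc.card_image_toRight_le_card_toLeft _ (fun _ _ => fst_eq_of_adj)
      (toLeft_nonempty_of_isCycle hc)
  refine false_of_two_cycle_traces hl hf h01 h12 ((hcard hc₁).trans hl₁)
    ((hcard hc₂).trans hl₂) (hcomp hc₁) (hcomp hc₂) ?_
  rw [← toLeft_inter, ← toRight_inter, card_toLeft_add_card_toRight]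
  refine card_le_one.2 fun a ha b hb => ?_
  rw [mem_inter, List.mem_toFinset, List.mem_toFinset] at ha hb
  rw [hshared a ha.1 ha.2, hshared b hb.1 hb.2]

theorem containsCll_of_two_mul_sub_three_le {l : ℕ} (hl : 4 ≤ l) (hf : Antitone f)
    (hft : ∀ i, 1 ≤ f i ↔ i < t) (h : 2 * l - 3 ≤ f 0 + f 1) :
    ContainsCll (joinG (⊤ : SimpleGraph (Fin 2)) (pathsUnion t f)) l := by
  have h10 : f 1 ≤ f 0 := hf (Nat.zero_le 1)
  have hlen := length_pathVertices hft
  set s := min (f 0 - (l - 1)) (l - 2)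
  have hsub : ∀ i n, ((pathVertices t f i).take n).Sublist (pathVertices t f i) :=
    fun _ _ => List.take_sublist _ _
  refine containsCll_joinG_top_of_isChain (by omega) (A := (pathVertices t f 0).take (l - 1))
    (B := ((pathVertices t f 0).drop (l - 1)).take s)
    (C := (pathVertices t f 1).take (l - 2 - s))
    ((isChain_pathVertices 0).take _) (((isChain_pathVertices 0).drop _).take _)
    ((isChain_pathVertices 1).take _) ?_ (by simp [hlen]; omega) (by simp [hlen]; omega)
  rw [← List.take_add]
  exact ((nodup_pathVertices 0).sublist (hsub _ _)).append
    ((nodup_pathVertices 1).sublist (hsub _ _))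
    (disjoint_of_sublist_pathVertices zero_ne_one (hsub _ _) (hsub _ _))

theorem containsCll_of_sub_one_le {l : ℕ} (hl : 4 ≤ l) (hft : ∀ i, 1 ≤ f i ↔ i < t)
    (h0 : l - 1 ≤ f 0) (h12 : l - 2 ≤ f 1 + f 2) :
    ContainsCll (joinG (⊤ : SimpleGraph (Fin 2)) (pathsUnion t f)) l := by
  have hlen := length_pathVertices hft
  set s := min (f 1) (l - 2)
  have hsub : ∀ i n, ((pathVertices t f i).take n).Sublist (pathVertices t f i) :=
    fun _ _ => List.take_sublist _ _
  refine containsCll_joinG_top_of_isChain (by omega) (A := (pathVertices t f 0).take (l - 1))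
    (B := (pathVertices t f 1).take s) (C := (pathVertices t f 2).take (l - 2 - s))
    ((isChain_pathVertices 0).take _) ((isChain_pathVertices 1).take _)
    ((isChain_pathVertices 2).take _) ?_ (by simp [hlen]; omega) (by simp [hlen]; omega)
  refine (((nodup_pathVertices 0).sublist (hsub _ _)).append
    ((nodup_pathVertices 1).sublist (hsub _ _))
    (disjoint_of_sublist_pathVertices (by decide) (hsub _ _) (hsub _ _))).append
    ((nodup_pathVertices 2).sublist (hsub _ _)) ?_
  exact List.disjoint_append_left.2
    ⟨disjoint_of_sublist_pathVertices (by decide) (hsub _ _) (hsub _ _),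
      disjoint_of_sublist_pathVertices (by decide) (hsub _ _) (hsub _ _)⟩

end joinPaths

theorem stmt7 (l t : ℕ) (hl : 4 ≤ l) (f : ℕ → ℕ) (hf : Antitone f)
    (hft : ∀ i, 1 ≤ f i ↔ i < t) :
    (¬ ContainsCll (joinG (⊤ : SimpleGraph (Fin 2)) (pathsUnion t f)) l) ↔
      ((f 0 + f 1 ≤ 2 * l - 4 ∧ f 0 ≤ l - 2) ∨
        (f 0 + f 1 ≤ 2 * l - 4 ∧ f 1 + f 2 ≤ l - 3)) := by
  refine ⟨fun hfree => ?_, ?_⟩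
  · by_contra hbound
    by_cases h01 : 2 * l - 3 ≤ f 0 + f 1
    · exact hfree (containsCll_of_two_mul_sub_three_le hl hf hft h01)
    · exact hfree (containsCll_of_sub_one_le hl hft (by omega) (by omega))
  · rintro (⟨h01, h0⟩ | ⟨h01, h12⟩)
    exacts [not_containsCll hl hf h01 (Or.inl h0), not_containsCll hl hf h01 (Or.inr h12)]
end
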